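/- The invariants A_n, D_n, and W_n of Gauss diagrams are additive under connected sum: if G is a connected sum of G₁ and G₂ then A_n(G) = A_n(G₁) + A_n(G₂), and similarly for D_n and W_n. This holds because in each of the patterns a_n, d_n, w_n, every arrow crosses some other arrow of the pattern, so any matching subdiagram of a connected sum has all its arrows in a single summand. -/
import Mathlib


/-!
A combinatorial model of Gauss diagrams of knot diagrams, following
Östlund, "Invariants of knot diagrams and relations among Reidemeister
moves".  Positions on the oriented circle are modeled by natural numbers,
listed in the cyclic order obtained by cutting the circle at a base point
which is not an endpoint of any arrow.
-/

/-- An arrow of a Gauss diagram: a signed, directed chord of the circle. -/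
structure Arrow where
  tail : ℕ
  head : ℕ
  sign : ℤ
deriving DecidableEq

/-- A Gauss diagram: a finite set of signed arrows on the circle. -/
abbrev GaussDiagram := Finset Arrow

/-- The endpoint positions of a Gauss diagram. -/
def endpoints (G : GaussDiagram) : Finset ℕ :=
  G.image Arrow.tail ∪ G.image Arrow.head

/-- The writhe of a Gauss diagram: the sum of the signs of all its arrows. -/
def writhe (G : GaussDiagram) : ℤ := ∑ a ∈ G, a.sign

/-- `x` lies strictly inside the chord of the arrow `a`. -/
def inArc (a : Arrow) (x : ℕ) : Prop :=
  min a.tail a.head < x ∧ x < max a.tail a.head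

/-- Two arrows cross: their endpoints interleave on the circle. -/
def Crosses (a b : Arrow) : Prop := Xor' (inArc a b.tail) (inArc a b.head)

/-- Strict cyclic betweenness: starting at `x` and moving in the positive
direction along the circle one meets `y` strictly before `z`. -/
def CycBtw (x y z : ℕ) : Prop :=
  (x < y ∧ y < z) ∨ (y < z ∧ z < x) ∨ (z < x ∧ x < y)

/-- `x` and `y` are cyclically adjacent among the points of `E`: no point of
`E` lies strictly between them on one of the two arcs joining them. -/
def AdjacentIn (E : Finset ℕ) (x y : ℕ) : Prop :=
  x ∈ E ∧ y ∈ E ∧ x ≠ y ∧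
    ((∀ z ∈ E, z ≤ min x y ∨ max x y ≤ z) ∨ (∀ z ∈ E, min x y ≤ z ∧ z ≤ max x y))

/-- `y` is the immediate cyclic successor of `x` among the points of `E`. -/
def SuccIn (E : Finset ℕ) (x y : ℕ) : Prop :=
  x ∈ E ∧ y ∈ E ∧ x ≠ y ∧
    ((x < y ∧ ∀ z ∈ E, ¬(x < z ∧ z < y)) ∨ (y < x ∧ ∀ z ∈ E, y ≤ z ∧ z ≤ x))

/-- An arrow is isolated in `G` if its head and tail are adjacent among all
endpoints of `G`. -/
def Isolated (G : GaussDiagram) (a : Arrow) : Prop :=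
  AdjacentIn (endpoints G) a.tail a.head

/-- An endpoint selector: the tail or the head of an arrow. -/
def EndSel (u : Arrow → ℕ) : Prop := u = Arrow.tail ∨ u = Arrow.head

/-- `S` matches the abstract pattern `P`: there is a bijection of arrows which
preserves heads/tails and the cyclic order of all endpoints (the signs of the
pattern arrows are ignored). -/
def MatchesPattern (P S : Finset Arrow) : Prop :=
  ∃ f : Arrow → Arrow, Set.BijOn f ↑P ↑S ∧
    ∀ u v w : Arrow → ℕ, EndSel u → EndSel v → EndSel w →
      ∀ a ∈ P, ∀ b ∈ P, ∀ c ∈ P,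
        (CycBtw (u a) (v b) (w c) ↔ CycBtw (u (f a)) (v (f b)) (w (f c)))

/-- The arrow-diagram invariant associated to a pattern `P`: the sum, over all
subdiagrams of `G` matching `P`, of the product of the signs of the arrows of
the subdiagram. -/
noncomputable def patCount (P : Finset Arrow) (G : GaussDiagram) : ℤ := by
  classical
  exact ∑ S ∈ G.powerset.filter (fun S => MatchesPattern P S), ∏ a ∈ S, a.sign

/-- The cyclic pattern `a_n`: `n` arrows arranged cyclically so that
consecutive arrows cross, meeting head to tail with the tail before the head,
and no other pairs cross. -/
def patternA (n : ℕ) : Finset Arrow :=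
  (Finset.range n).image (fun i => ⟨2 * i, (2 * i + 3) % (2 * n), 1⟩)

/-- Orientation reversal of a Gauss diagram. -/
def revDiagram (G : GaussDiagram) : GaussDiagram :=
  G.image (fun a =>
    ⟨(endpoints G).sup id - a.tail, (endpoints G).sup id - a.head, a.sign⟩)

/-- Mirroring: negate the signs of all arrows. -/
def mirror (G : GaussDiagram) : GaussDiagram :=
  G.image (fun a => ⟨a.tail, a.head, -a.sign⟩)

/-- The pattern `d_n`: the orientation reversal of `a_n`. -/
def patternD (n : ℕ) : Finset Arrow := revDiagram (patternA n)

/-- The pattern `w_n` (`n` odd): `n` pairwise crossing "diameters", directed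
so that no two arrow heads are adjacent among the `2n` endpoints. -/
def patternW (n : ℕ) : Finset Arrow :=
  (Finset.range n).image
    (fun i => if i % 2 = 0 then ⟨i + n, i, 1⟩ else ⟨i, i + n, 1⟩)

/-- The knot diagram invariant `A_n`. -/
noncomputable def A (n : ℕ) (G : GaussDiagram) : ℤ := patCount (patternA n) G

/-- The knot diagram invariant `D_n`. -/
noncomputable def D (n : ℕ) (G : GaussDiagram) : ℤ := patCount (patternD n) G

/-- The knot diagram invariant `W_n` (the weirdness for `n = 3`). -/
noncomputable def W (n : ℕ) (G : GaussDiagram) : ℤ := patCount (patternW n) G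

/-- `G` is a connected sum of `G₁` and `G₂`: two points split the circle into
two arcs, every arrow of `G` has both endpoints on one of the arcs, and the
arrows on the two arcs form `G₁` and `G₂` respectively. -/
def IsConnectedSum (G G₁ G₂ : GaussDiagram) : Prop :=
  Disjoint G₁ G₂ ∧ G = G₁ ∪ G₂ ∧
    ∃ c : ℕ, (∀ a ∈ G₁, a.tail < c ∧ a.head < c) ∧
      (∀ a ∈ G₂, c < a.tail ∧ c < a.head)

/-- A valid crossing sign. -/
def IsSign (s : ℤ) : Prop := s = 1 ∨ s = -1

/-- A positively directed Ω₁-move: adds one isolated arrow of sign `j`. -/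
def Omega1Add (G G' : GaussDiagram) (j : ℤ) : Prop :=
  ∃ a : Arrow, a ∉ G ∧ a.tail ≠ a.head ∧ a.sign = j ∧ IsSign j ∧
    G' = insert a G ∧ Isolated G' a

/-- An Ω₁-move (in either direction). -/
def IsOmega1 (G G' : GaussDiagram) : Prop :=
  (∃ j, Omega1Add G G' j) ∨ (∃ j, Omega1Add G' G j)

/-- A positively directed Ω₂-move: adds two arrows of opposite signs whose
tails are adjacent and whose heads are adjacent on the circle. -/
def Omega2Add (G G' : GaussDiagram) : Prop :=
  ∃ a b : Arrow, a ∉ G ∧ b ∉ G ∧ a ≠ b ∧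
    a.tail ≠ a.head ∧ b.tail ≠ b.head ∧
    IsSign a.sign ∧ b.sign = -a.sign ∧
    G' = insert a (insert b G) ∧
    AdjacentIn (endpoints G') a.tail b.tail ∧
    AdjacentIn (endpoints G') a.head b.head

/-- An Ω₂-move (in either direction). -/
def IsOmega2 (G G' : GaussDiagram) : Prop := Omega2Add G G' ∨ Omega2Add G' G

/-- The data of an Ω₃-move on `G`: three mutually crossing arrows of `G`
whose six endpoints form three sites of two adjacent endpoints each (one site
on each of the three strands of the changing disk), the arrows joining the
three sites pairwise. -/
structure Omega3Data (G : GaussDiagram) where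
  a : Arrow
  b : Arrow
  c : Arrow
  q1 : ℕ
  q2 : ℕ
  q3 : ℕ
  q4 : ℕ
  q5 : ℕ
  q6 : ℕ
  ha : a ∈ G
  hb : b ∈ G
  hc : c ∈ G
  hab : a ≠ b
  hac : a ≠ c
  hbc : b ≠ c
  cab : Crosses a b
  cac : Crosses a c
  cbc : Crosses b c
  adj12 : AdjacentIn (endpoints G) q1 q2
  adj34 : AdjacentIn (endpoints G) q3 q4
  adj56 : AdjacentIn (endpoints G) q5 q6
  ea : ({a.tail, a.head} : Finset ℕ) ⊆ {q1, q2, q3, q4}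
  eb : ({b.tail, b.head} : Finset ℕ) ⊆ {q1, q2, q5, q6}
  ec : ({c.tail, c.head} : Finset ℕ) ⊆ {q3, q4, q5, q6}
  hq : ({q1, q2, q3, q4, q5, q6} : Finset ℕ) =
    {a.tail, a.head, b.tail, b.head, c.tail, c.head}

/-- Interchange the two adjacent endpoints at each of the three sites. -/
def swap6 (q1 q2 q3 q4 q5 q6 x : ℕ) : ℕ :=
  if x = q1 then q2 else if x = q2 then q1 else
  if x = q3 then q4 else if x = q4 then q3 else
  if x = q5 then q6 else if x = q6 then q5 else x

/-- The effect of the Ω₃-move on an arrow. -/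
def Omega3Data.mapArrow {G : GaussDiagram} (d : Omega3Data G) (e : Arrow) : Arrow :=
  ⟨swap6 d.q1 d.q2 d.q3 d.q4 d.q5 d.q6 e.tail,
   swap6 d.q1 d.q2 d.q3 d.q4 d.q5 d.q6 e.head, e.sign⟩

/-- The result of the Ω₃-move determined by `d`: the two adjacent endpoints at
each of the three sites are interchanged, all other arrows are unchanged. -/
def Omega3Move (G : GaussDiagram) (d : Omega3Data G) : GaussDiagram :=
  (G \ {d.a, d.b, d.c}) ∪ {d.mapArrow d.a, d.mapArrow d.b, d.mapArrow d.c}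

/-- An Ω₃-move (in either direction). -/
def IsOmega3 (G G' : GaussDiagram) : Prop :=
  (∃ d : Omega3Data G, G' = Omega3Move G d) ∨
  (∃ d : Omega3Data G', G = Omega3Move G' d)

/-- `x` is the position of a tail of one of the three affected arrows. -/
def TailPos {G : GaussDiagram} (d : Omega3Data G) (x : ℕ) : Prop :=
  x = d.a.tail ∨ x = d.b.tail ∨ x = d.c.tail

/-- `x` is the position of a head of one of the three affected arrows. -/
def HeadPos {G : GaussDiagram} (d : Omega3Data G) (x : ℕ) : Prop :=
  x = d.a.head ∨ x = d.b.head ∨ x = d.c.head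

/-- The move determined by `d` has class `Ω₃ᵢⱼₖₘ`: listing the three sites in
the order top, middle, bottom strand (paired each with the opposite arrow,
i.e., the one not meeting that site), the top site carries two tails (two
overcrossings) and the bottom site two heads; `i`, `j`, `k` are the signs of
the crossings between the top–middle, top–bottom and middle–bottom strands
respectively, and `m = 1` iff the move is descending, i.e. the three strands
are visited in the cyclic order top–middle–bottom along the knot. -/
def Omega3Data.IsClass {G : GaussDiagram} (d : Omega3Data G) (i j k m : ℤ) : Prop :=
  (m = 1 ∨ m = -1) ∧
  ∃ p : Fin 3 → (ℕ × ℕ) × Arrow,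
    Set.range p = {((d.q1, d.q2), d.c), ((d.q3, d.q4), d.b), ((d.q5, d.q6), d.a)} ∧
    TailPos d (p 0).1.1 ∧ TailPos d (p 0).1.2 ∧
    HeadPos d (p 2).1.1 ∧ HeadPos d (p 2).1.2 ∧
    (p 2).2.sign = i ∧ (p 1).2.sign = j ∧ (p 0).2.sign = k ∧
    (m = 1 ↔ CycBtw (p 0).1.1 (p 1).1.1 (p 2).1.1)

/-- An Ω₃-move of class `Ω₃ᵢⱼₖₘ` (in either direction; the class of a move
does not depend on the direction in which it is performed). -/
def IsOmega3Class (i j k m : ℤ) (G G' : GaussDiagram) : Prop :=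
  (∃ d : Omega3Data G, G' = Omega3Move G d ∧ d.IsClass i j k m) ∨
  (∃ d : Omega3Data G', G = Omega3Move G' d ∧ d.IsClass i j k m)

/-- A descending Ω₃-move. -/
def IsDescendingOmega3 (G G' : GaussDiagram) : Prop :=
  ∃ i j k, IsOmega3Class i j k 1 G G'

/-- An ascending Ω₃-move. -/
def IsAscendingOmega3 (G G' : GaussDiagram) : Prop :=
  ∃ i j k, IsOmega3Class i j k (-1) G G'

/-- A Reidemeister move of Gauss diagrams. -/
def RMove (G G' : GaussDiagram) : Prop :=
  IsOmega1 G G' ∨ IsOmega2 G G' ∨ IsOmega3 G G'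

/-! ### Auxiliary material for Statement 19 -/

/-- `q` lies on the arc from `p` to `r` and `s` on the arc from `r` to `p`. -/
def XRel (p q r s : ℕ) : Prop := CycBtw p q r ∧ CycBtw r s p

/-- A crossing relation expressible purely in terms of `CycBtw` atoms. -/
def CrossRel (a b : Arrow) : Prop :=
  XRel a.tail b.tail a.head b.head ∨ XRel a.tail b.head a.head b.tail ∨
  XRel a.head b.tail a.tail b.head ∨ XRel a.head b.head a.tail b.tail

lemma crossRel_transport {P : Finset Arrow} {f : Arrow → Arrow}
    (hf : ∀ u v w : Arrow → ℕ, EndSel u → EndSel v → EndSel w →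
      ∀ a ∈ P, ∀ b ∈ P, ∀ c ∈ P,
        (CycBtw (u a) (v b) (w c) ↔ CycBtw (u (f a)) (v (f b)) (w (f c))))
    {a b : Arrow} (ha : a ∈ P) (hb : b ∈ P) :
    CrossRel a b ↔ CrossRel (f a) (f b) := by
  have t : EndSel Arrow.tail := Or.inl rfl
  have h : EndSel Arrow.head := Or.inr rfl
  unfold CrossRel XRel
  rw [hf _ _ _ t t h a ha b hb a ha, hf _ _ _ h h t a ha b hb a ha,
      hf _ _ _ t h h a ha b hb a ha, hf _ _ _ h t t a ha b hb a ha]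

lemma not_crossRel_sep {a b : Arrow} {c : ℕ}
    (h : (a.tail < c ∧ a.head < c ∧ c < b.tail ∧ c < b.head) ∨
         (b.tail < c ∧ b.head < c ∧ c < a.tail ∧ c < a.head)) :
    ¬ CrossRel a b := by
  unfold CrossRel XRel CycBtw; omega

/-- Reachability along the crossing relation inside a pattern. -/
def PReach (P : Finset Arrow) : Arrow → Arrow → Prop :=
  Relation.ReflTransGen (fun x y => x ∈ P ∧ y ∈ P ∧ CrossRel x y)

lemma matches_side (P : Finset Arrow) (a0 : Arrow)
    (hconn : ∀ b ∈ P, PReach P a0 b)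
    (G₁ G₂ : GaussDiagram) (c : ℕ)
    (h1 : ∀ a ∈ G₁, a.tail < c ∧ a.head < c)
    (h2 : ∀ a ∈ G₂, c < a.tail ∧ c < a.head)
    (S : Finset Arrow) (hS : S ⊆ G₁ ∪ G₂) (hm : MatchesPattern P S) :
    S ⊆ G₁ ∨ S ⊆ G₂ := by
  obtain ⟨f, hbij, hf⟩ := hm
  have hmem : ∀ a ∈ P, f a ∈ G₁ ∨ f a ∈ G₂ := by
    intro a ha
    have h1' : f a ∈ S := hbij.1 (Finset.mem_coe.mpr ha)
    simpa [Finset.mem_union] using hS h1'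
  have key : ∀ b, PReach P a0 b →
      (f a0 ∈ G₁ → f b ∈ G₁) ∧ (f a0 ∈ G₂ → f b ∈ G₂) := by
    intro b hr
    induction hr with
    | refl => exact ⟨id, id⟩
    | tail _ e ih =>
      rename_i mid b' _
      obtain ⟨hmid, hb', hcr⟩ := e
      have hcr' : CrossRel (f mid) (f b') :=
        (crossRel_transport hf hmid hb').mp hcr
      constructor
      · intro h0
        rcases hmem b' hb' with hg | hg
        · exact hg
        · exact absurd hcr'
            (not_crossRel_sep (Or.inl ⟨(h1 _ (ih.1 h0)).1, (h1 _ (ih.1 h0)).2,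
              (h2 _ hg).1, (h2 _ hg).2⟩))
      · intro h0
        rcases hmem b' hb' with hg | hg
        · exact absurd hcr'
            (not_crossRel_sep (Or.inr ⟨(h1 _ hg).1, (h1 _ hg).2,
              (h2 _ (ih.2 h0)).1, (h2 _ (ih.2 h0)).2⟩))
        · exact hg
  have hsurj := hbij.2.2
  by_cases ha0P : a0 ∈ P
  · rcases hmem a0 ha0P with h0 | h0
    · left
      intro x hx
      obtain ⟨b, hbP, rfl⟩ := hsurj (Finset.mem_coe.mpr hx)
      exact (key b (hconn b hbP)).1 h0
    · right
      intro x hx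
      obtain ⟨b, hbP, rfl⟩ := hsurj (Finset.mem_coe.mpr hx)
      exact (key b (hconn b hbP)).2 h0
  · -- then P = ∅ would be needed; but any b ∈ P is reachable from a0,
    -- and reachability starts at a0 ∈ P unless the path is trivial
    left
    intro x hx
    obtain ⟨b, hbP, rfl⟩ := hsurj (Finset.mem_coe.mpr hx)
    rcases (hconn b hbP).cases_head with rfl | ⟨mid, e, _⟩
    · exact absurd hbP ha0P
    · exact absurd e.1 ha0P

lemma matchesPattern_empty {P : Finset Arrow} (hne : P.Nonempty)
    (hm : MatchesPattern P (∅ : Finset Arrow)) : False := by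
  obtain ⟨a, ha⟩ := hne
  obtain ⟨f, hbij, -⟩ := hm
  have := hbij.1 (Finset.mem_coe.mpr ha)
  simp at this

lemma patCount_split (P : Finset Arrow) (hne : P.Nonempty) (a0 : Arrow)
    (hconn : ∀ b ∈ P, PReach P a0 b)
    (G₁ G₂ : GaussDiagram) (hd : Disjoint G₁ G₂) (c : ℕ)
    (h1 : ∀ a ∈ G₁, a.tail < c ∧ a.head < c)
    (h2 : ∀ a ∈ G₂, c < a.tail ∧ c < a.head) :
    patCount P (G₁ ∪ G₂) = patCount P G₁ + patCount P G₂ := by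
  classical
  unfold patCount
  have hdisj : Disjoint
      (G₁.powerset.filter (fun S => MatchesPattern P S))
      (G₂.powerset.filter (fun S => MatchesPattern P S)) := by
    rw [Finset.disjoint_left]
    intro S hS1 hS2
    simp only [Finset.mem_filter, Finset.mem_powerset] at hS1 hS2
    rcases Finset.eq_empty_or_nonempty S with rfl | ⟨x, hx⟩
    · exact matchesPattern_empty hne hS1.2
    · exact (Finset.disjoint_left.mp hd (hS1.1 hx)) (hS2.1 hx)
  rw [← Finset.sum_union hdisj]
  apply Finset.sum_congr _ (fun _ _ => rfl)
  ext S
  simp only [Finset.mem_filter, Finset.mem_powerset, Finset.mem_union]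
  constructor
  · rintro ⟨hsub, hm⟩
    rcases matches_side P a0 hconn G₁ G₂ c h1 h2 S hsub hm with h | h
    · exact Or.inl ⟨h, hm⟩
    · exact Or.inr ⟨h, hm⟩
  · rintro (⟨h, hm⟩ | ⟨h, hm⟩)
    · exact ⟨h.trans Finset.subset_union_left, hm⟩
    · exact ⟨h.trans Finset.subset_union_right, hm⟩

/-! ### The pattern `a_n` -/

def arrA (n i : ℕ) : Arrow := ⟨2 * i, (2 * i + 3) % (2 * n), 1⟩

lemma mem_patternA {n : ℕ} {a : Arrow} :
    a ∈ patternA n ↔ ∃ i < n, arrA n i = a := by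
  simp [patternA, arrA, Finset.mem_image]

lemma arrA_mem {n i : ℕ} (hi : i < n) : arrA n i ∈ patternA n :=
  mem_patternA.mpr ⟨i, hi, rfl⟩

lemma crossA {n i : ℕ} (hn : 4 ≤ n) (hi : i + 1 < n) :
    CrossRel (arrA n i) (arrA n (i + 1)) := by
  have m1 : (2 * i + 3) % (2 * n) = 2 * i + 3 := Nat.mod_eq_of_lt (by omega)
  have m2 : (2 * (i + 1) + 3) % (2 * n) = 2 * i + 5 ∨
      ((2 * (i + 1) + 3) % (2 * n) = 1 ∧ i + 2 = n) := by
    rcases lt_or_ge (i + 2) n with h | h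
    · exact Or.inl (Nat.mod_eq_of_lt (by omega))
    · have hn2 : i + 2 = n := by omega
      refine Or.inr ⟨?_, hn2⟩
      have he : 2 * (i + 1) + 3 = 2 * n + 1 := by omega
      rw [he, Nat.add_mod_left, Nat.mod_eq_of_lt (by omega)]
  left
  unfold arrA XRel CycBtw
  simp only
  rw [m1]
  rcases m2 with h | ⟨h, hn2⟩ <;> rw [h] <;> omega

lemma connA {n : ℕ} (hn : 4 ≤ n) :
    ∀ b ∈ patternA n, PReach (patternA n) (arrA n 0) b := by
  have step : ∀ i, i < n → PReach (patternA n) (arrA n 0) (arrA n i) := by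
    intro i
    induction i with
    | zero => exact fun _ => Relation.ReflTransGen.refl
    | succ i ih =>
      intro hi
      exact Relation.ReflTransGen.tail (ih (by omega))
        ⟨arrA_mem (by omega), arrA_mem hi, crossA hn hi⟩
  intro b hb
  obtain ⟨i, hi, rfl⟩ := mem_patternA.mp hb
  exact step i hi

/-! ### The pattern `d_n` -/

lemma sup_endpoints_patternA {n : ℕ} (hn : 4 ≤ n) :
    (endpoints (patternA n)).sup id = 2 * n - 1 := by
  apply le_antisymm
  · apply Finset.sup_le
    intro x hx
    simp only [endpoints, Finset.mem_union, Finset.mem_image, patternA] at hx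
    rcases hx with ⟨a, ⟨i, hi, rfl⟩, rfl⟩ | ⟨a, ⟨i, hi, rfl⟩, rfl⟩
    · simp only [Finset.mem_range] at hi
      simp only [id]
      omega
    · simp only [Finset.mem_range] at hi
      have := Nat.mod_lt (2 * i + 3) (y := 2 * n) (by omega)
      simp only [id]
      omega
  · have hmem : (2 * n - 1 : ℕ) ∈ endpoints (patternA n) := by
      simp only [endpoints, Finset.mem_union, Finset.mem_image, patternA]
      right
      refine ⟨arrA n (n - 2), ⟨n - 2, Finset.mem_range.mpr (by omega), rfl⟩, ?_⟩
      show (2 * (n - 2) + 3) % (2 * n) = 2 * n - 1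
      rw [Nat.mod_eq_of_lt (by omega)]
      omega
    exact Finset.le_sup (f := id) hmem

def arrD (n i : ℕ) : Arrow :=
  ⟨2 * n - 1 - 2 * i, 2 * n - 1 - (2 * i + 3) % (2 * n), 1⟩

lemma mem_patternD {n : ℕ} (hn : 4 ≤ n) {a : Arrow} :
    a ∈ patternD n ↔ ∃ i < n, arrD n i = a := by
  unfold patternD revDiagram
  rw [sup_endpoints_patternA hn]
  simp only [Finset.mem_image]
  constructor
  · rintro ⟨b, hb, rfl⟩
    obtain ⟨i, hi, rfl⟩ := mem_patternA.mp hb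
    exact ⟨i, hi, rfl⟩
  · rintro ⟨i, hi, rfl⟩
    exact ⟨arrA n i, arrA_mem hi, rfl⟩

lemma arrD_mem {n i : ℕ} (hn : 4 ≤ n) (hi : i < n) : arrD n i ∈ patternD n :=
  (mem_patternD hn).mpr ⟨i, hi, rfl⟩

lemma crossD {n i : ℕ} (hn : 4 ≤ n) (hi : i + 1 < n) :
    CrossRel (arrD n i) (arrD n (i + 1)) := by
  have m1 : (2 * i + 3) % (2 * n) = 2 * i + 3 := Nat.mod_eq_of_lt (by omega)
  right; right; left
  unfold arrD XRel CycBtw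
  simp only
  rw [m1]
  rcases lt_or_ge (i + 2) n with h | h
  · rw [Nat.mod_eq_of_lt (show 2 * (i + 1) + 3 < 2 * n by omega)]; omega
  · have he : 2 * (i + 1) + 3 = 2 * n + 1 := by omega
    rw [he, Nat.add_mod_left, Nat.mod_eq_of_lt (by omega)]
    omega

lemma connD {n : ℕ} (hn : 4 ≤ n) :
    ∀ b ∈ patternD n, PReach (patternD n) (arrD n 0) b := by
  have step : ∀ i, i < n → PReach (patternD n) (arrD n 0) (arrD n i) := by
    intro i
    induction i with
    | zero => exact fun _ => Relation.ReflTransGen.refl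
    | succ i ih =>
      intro hi
      exact Relation.ReflTransGen.tail (ih (by omega))
        ⟨arrD_mem hn (by omega), arrD_mem hn hi, crossD hn hi⟩
  intro b hb
  obtain ⟨i, hi, rfl⟩ := (mem_patternD hn).mp hb
  exact step i hi

/-! ### The pattern `w_n` -/

def arrW (n i : ℕ) : Arrow :=
  if i % 2 = 0 then ⟨i + n, i, 1⟩ else ⟨i, i + n, 1⟩

lemma mem_patternW {n : ℕ} {a : Arrow} :
    a ∈ patternW n ↔ ∃ i < n, arrW n i = a := by
  simp [patternW, arrW, Finset.mem_image]

lemma arrW_mem {n i : ℕ} (hi : i < n) : arrW n i ∈ patternW n :=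
  mem_patternW.mpr ⟨i, hi, rfl⟩

lemma crossW {n j : ℕ} (hj0 : 0 < j) (hj : j < n) :
    CrossRel (arrW n 0) (arrW n j) := by
  by_cases hp : j % 2 = 0 <;>
    simp only [arrW, hp, if_true, if_false, Nat.zero_mod, reduceIte] <;>
    unfold CrossRel XRel CycBtw <;> simp only <;> omega

lemma connW {n : ℕ} (hn : 0 < n) :
    ∀ b ∈ patternW n, PReach (patternW n) (arrW n 0) b := by
  intro b hb
  obtain ⟨j, hj, rfl⟩ := mem_patternW.mp hb
  rcases Nat.eq_zero_or_pos j with rfl | hj0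
  · exact Relation.ReflTransGen.refl
  · exact Relation.ReflTransGen.single
      ⟨arrW_mem hn, arrW_mem hj, crossW hj0 hj⟩

/-- The invariants `A_n`, `D_n` and `W_n` are additive under
connected sum of Gauss diagrams. -/
theorem invariants_additive (G G₁ G₂ : GaussDiagram)
    (h : IsConnectedSum G G₁ G₂) :
    (∀ n : ℕ, 4 ≤ n → A n G = A n G₁ + A n G₂ ∧ D n G = D n G₁ + D n G₂) ∧
    (∀ n : ℕ, Odd n → W n G = W n G₁ + W n G₂) := by
  obtain ⟨hd, rfl, c, h1, h2⟩ := h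
  constructor
  · intro n hn
    constructor
    · exact patCount_split (patternA n) ⟨arrA n 0, arrA_mem (by omega)⟩
        (arrA n 0) (connA hn) G₁ G₂ hd c h1 h2
    · exact patCount_split (patternD n) ⟨arrD n 0, arrD_mem hn (by omega)⟩
        (arrD n 0) (connD hn) G₁ G₂ hd c h1 h2
  · intro n hn
    have hn1 : 0 < n := hn.pos
    exact patCount_split (patternW n) ⟨arrW n 0, arrW_mem hn1⟩
      (arrW n 0) (connW hn1) G₁ G₂ hd c h1 h2
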